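/- arXiv:math/0310121 — 2 statements merged into one kernel-verified Lean document; each statement's English description precedes it below -/
import Mathlib

section
/- Let P be a finite graded Eulerian poset with 0̂ and 1̂, and let (x,y,z) be a proper zipper in P. Then the zipped poset P' is Eulerian. -/
/-- The underlying set of the zipped poset `P' = (P − {x,y,z}) ∪ {xy}`:
elements of `P` other than `x`, `y`, `z`, together with one new element `xy`
(represented by `Sum.inr ()`). -/
def ZipCarrier (α : Type*) (x y z : α) : Type _ :=
  {p : α // p ≠ x ∧ p ≠ y ∧ p ≠ z} ⊕ Unit

/-- The order relation `⪯` on the zipped poset: `a ⪯ b` if `a ≤ b` in `P`;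
`xy ⪯ a` if `x ≤ a` or `y ≤ a`; `a ⪯ xy` if `a ≤ x`; and `xy ⪯ xy`. -/
def zipLE {α : Type*} [PartialOrder α] (x y z : α) :
    ZipCarrier α x y z → ZipCarrier α x y z → Prop
  | .inl a, .inl b => a.val ≤ b.val
  | .inr _, .inl b => x ≤ b.val ∨ y ≤ b.val
  | .inl a, .inr _ => a.val ≤ x
  | .inr _, .inr _ => True

/-- `(x,y,z)` is a zipper in `P`: `z` covers `x` and `y` and covers no other element,
`z = x ∨ y` (the join), and the sets of elements strictly below `x` and `y` agree. -/
def IsZipper {α : Type*} [PartialOrder α] (x y z : α) : Prop :=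
  x ≠ y ∧ x ≠ z ∧ y ≠ z ∧
  (x ⋖ z) ∧ (y ⋖ z) ∧ (∀ w : α, w ⋖ z → w = x ∨ w = y) ∧
  IsLUB {x, y} z ∧
  (∀ a : α, a < x ↔ a < y)

open scoped Classical in
/-- `μ` is the Möbius function of the relation `r`:
`∑_{c : r a c ∧ r c b} μ(a,c) = δ_{a,b}` for all `a ≤ b`. -/
noncomputable def IsMoebius {α : Type*} (r : α → α → Prop) (μ : α → α → ℤ) : Prop :=
  ∀ a b : α, r a b →
    (∑ᶠ c ∈ {c : α | r a c ∧ r c b}, μ a c) = if a = b then 1 else 0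

/-- The rank function of the zipped poset: old elements keep their rank, and
the new element `xy` has the common rank of `x` and `y`. -/
def zipRank {α : Type*} (x y z : α) (rk : α → ℕ) : ZipCarrier α x y z → ℕ
  | .inl a => rk a.val
  | .inr _ => rk x

/-!
The candidate `ν(A, B) = (-1)^(rk B - rk A)` satisfies the defining recursion of the Möbius
function of `P'`, so it is that Möbius function. As ranks are monotone, the recursion says
`∑_{A ⪯ C ⪯ B} (-1)^rk C = δ_{AB} (-1)^rk A`. Send `xy` to `x` and read it as standing for both
`x` and `y`: the interval `[A, B]` of `P'` becomes the set `zipAbove A ∩ zipBelow B` of `P`,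
except that the contribution of `{x, y, z}` is replaced by that of `xy`. Because `y` has the sign
of `x`, `z` the opposite one, and `z ≤ b ↔ x ≤ b ∧ y ≤ b`, inclusion–exclusion shows that the two
contributions agree. Finally that set is an interval of `P`, `{x}`, or `[x, b] ∪ [y, b]` with
overlap `[z, b]`, and the Eulerian property of `P` evaluates all of these.
-/

open Set

theorem neg_one_pow_sub_of_le {m n : ℕ} (h : m ≤ n) :
    (-1 : ℤ) ^ (n - m) = (-1) ^ n * (-1) ^ m := by
  obtain ⟨k, rfl⟩ := Nat.exists_eq_add_of_le h
  rw [Nat.add_sub_cancel_left, pow_add, mul_right_comm, ← pow_add, Even.neg_one_pow ⟨m, rfl⟩,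
    one_mul]

theorem monotone_of_covBy_eq_add_one {β : Type*} [PartialOrder β] [Finite β] {ρ : β → ℕ}
    (hρ : ∀ a b, a ⋖ b → ρ b = ρ a + 1) : Monotone ρ := by
  classical
  have := Fintype.ofFinite β
  let := Fintype.toLocallyFiniteOrder (α := β)
  exact (monotone_iff_forall_covBy ρ).2 fun a b hab => (hρ a b hab).symm ▸ Nat.le_succ _

section Moebius

variable {β : Type*} [PartialOrder β]

theorem IsMoebius.eq_of_le [Finite β] {μ ν : β → β → ℤ} (hμ : IsMoebius (· ≤ ·) μ)
    (hν : IsMoebius (· ≤ ·) ν) {a b : β} (hab : a ≤ b) : μ a b = ν a b := by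
  classical
  induction b using WellFoundedLT.induction with
  | ind b ih =>
    have hμab : ∑ᶠ c ∈ Icc a b, μ a c = if a = b then 1 else 0 := hμ a b hab
    have hνab : ∑ᶠ c ∈ Icc a b, ν a c = if a = b then 1 else 0 := hν a b hab
    rw [← Ico_insert_right hab, finsum_mem_insert _ right_notMem_Ico (toFinite _)]
      at hμab hνab
    have hbelow : ∑ᶠ c ∈ Ico a b, μ a c = ∑ᶠ c ∈ Ico a b, ν a c :=
      finsum_mem_congr rfl fun c hc => ih c hc.2 hc.1
    linarith

open scoped Classical in
theorem isMoebius_neg_one_pow_iff [Finite β] {ρ : β → ℕ} (hρ : Monotone ρ) :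
    IsMoebius (· ≤ ·) (fun a b => (-1 : ℤ) ^ (ρ b - ρ a)) ↔
      ∀ a b : β, ∑ᶠ c ∈ Icc a b, (-1 : ℤ) ^ ρ c = if a = b then (-1) ^ ρ a else 0 := by
  have hsum (a b : β) : ∑ᶠ c ∈ Icc a b, (-1 : ℤ) ^ (ρ c - ρ a)
      = (∑ᶠ c ∈ Icc a b, (-1 : ℤ) ^ ρ c) * (-1) ^ ρ a := by
    rw [finsum_mem_eq_finite_toFinset_sum _ (toFinite _),
      finsum_mem_eq_finite_toFinset_sum _ (toFinite _), Finset.sum_mul]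
    refine Finset.sum_congr rfl fun c hc => ?_
    exact neg_one_pow_sub_of_le (hρ ((Finite.mem_toFinset _).1 hc).1)
  have hsq (a : β) : (-1 : ℤ) ^ ρ a * (-1) ^ ρ a = 1 := by
    rw [← pow_add, Even.neg_one_pow ⟨_, rfl⟩]
  constructor
  · intro h a b
    by_cases hab : a ≤ b
    · have : ∑ᶠ c ∈ Icc a b, (-1 : ℤ) ^ (ρ c - ρ a) = if a = b then 1 else 0 := h a b hab
      rw [hsum] at this
      calc ∑ᶠ c ∈ Icc a b, (-1 : ℤ) ^ ρ c
          = (∑ᶠ c ∈ Icc a b, (-1 : ℤ) ^ ρ c) * (-1) ^ ρ a * (-1) ^ ρ a := by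
            rw [mul_assoc, hsq, mul_one]
        _ = _ := by rw [this]; split_ifs <;> simp
    · rw [Icc_eq_empty hab, finsum_mem_empty, if_neg (fun h => hab h.le)]
  · intro h a b _
    show ∑ᶠ c ∈ Icc a b, _ = _
    rw [hsum, h]
    split_ifs
    · exact hsq a
    · exact zero_mul _

end Moebius

namespace IsZipper

variable {α : Type*} [PartialOrder α] {x y z : α}

theorem left_covBy (h : IsZipper x y z) : x ⋖ z := h.2.2.2.1

theorem right_covBy (h : IsZipper x y z) : y ⋖ z := h.2.2.2.2.1

theorem lt_left_iff (h : IsZipper x y z) {a : α} : a < x ↔ a < y := h.2.2.2.2.2.2.2 a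

theorem not_right_le_left (h : IsZipper x y z) : ¬y ≤ x := fun hyx =>
  ((h.lt_left_iff (a := y)).1 (hyx.lt_of_ne h.1.symm)).false

theorem le_left_iff_le_right (h : IsZipper x y z) {a : α} (hax : a ≠ x) (hay : a ≠ y) :
    a ≤ x ↔ a ≤ y :=
  ⟨fun ha => (h.lt_left_iff.1 (ha.lt_of_ne hax)).le,
    fun ha => (h.lt_left_iff.2 (ha.lt_of_ne hay)).le⟩

theorem join_le_iff (h : IsZipper x y z) {b : α} : z ≤ b ↔ x ≤ b ∧ y ≤ b := by
  rw [isLUB_le_iff h.2.2.2.2.2.2.1]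
  simp [upperBounds]

theorem le_join_iff [Finite α] (h : IsZipper x y z) {a : α} (hax : a ≠ x) (hay : a ≠ y)
    (haz : a ≠ z) : a ≤ z ↔ a ≤ x := by
  refine ⟨fun ha => ?_, fun ha => ha.trans h.left_covBy.le⟩
  obtain ⟨u, hau, hu⟩ := exists_le_covBy_of_lt (ha.lt_of_ne haz)
  rcases h.2.2.2.2.2.1 u hu with rfl | rfl
  · exact hau
  · exact (h.le_left_iff_le_right hax hay).2 hau

theorem rank_right_eq (h : IsZipper x y z) {ρ : α → ℕ}
    (hρ : ∀ a b, a ⋖ b → ρ b = ρ a + 1) : ρ y = ρ x := by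
  have := hρ x z h.left_covBy
  have := hρ y z h.right_covBy
  omega

theorem rank_join_eq (h : IsZipper x y z) {ρ : α → ℕ}
    (hρ : ∀ a b, a ⋖ b → ρ b = ρ a + 1) : ρ z = ρ x + 1 :=
  hρ x z h.left_covBy

abbrev zippedOrder (h : IsZipper x y z) : PartialOrder (ZipCarrier α x y z) where
  le := zipLE x y z
  le_refl := by
    rintro (a | _)
    · exact le_refl a.val
    · trivial
  le_trans := by
    rintro (a | _) (b | _) (c | _) hab hbc
    · exact le_trans hab hbc
    · exact le_trans hab hbc
    · exact hbc.elim hab.trans fun hyc =>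
        ((h.le_left_iff_le_right a.2.1 a.2.2.1).1 hab).trans hyc
    · exact hab
    · exact hab.imp (·.trans hbc) (·.trans hbc)
    · trivial
    · exact hbc
    · trivial
  le_antisymm := by
    rintro (a | _) (b | _) hab hba
    · exact congrArg Sum.inl (Subtype.ext (le_antisymm hab hba))
    · rcases hba with hxa | hya
      · exact absurd (le_antisymm hab hxa) a.2.1
      · exact absurd (hya.trans hab) h.not_right_le_left
    · rcases hab with hxb | hyb
      · exact absurd (le_antisymm hba hxb) b.2.1
      · exact absurd (hyb.trans hba) h.not_right_le_left
    · rfl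

end IsZipper

section Zipped

variable {α : Type*}

instance ZipCarrier.finite [Finite α] (x y z : α) : Finite (ZipCarrier α x y z) :=
  inferInstanceAs (Finite (_ ⊕ Unit))

def zipEmb (x y z : α) : ZipCarrier α x y z → α
  | .inl a => a.val
  | .inr _ => x

theorem zipEmb_injective (x y z : α) : Function.Injective (zipEmb x y z) := by
  rintro (a | _) (b | _) hab
  · exact congrArg Sum.inl (Subtype.ext hab)
  · exact absurd hab a.2.1
  · exact absurd hab.symm b.2.1
  · rfl

theorem zipRank_eq_comp_zipEmb (x y z : α) (ρ : α → ℕ) :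
    zipRank x y z ρ = ρ ∘ zipEmb x y z := by
  ext (_ | _) <;> rfl

variable [PartialOrder α]

def zipAbove (x y z : α) : ZipCarrier α x y z → Set α
  | .inl a => Ici a.val
  | .inr _ => Ici x ∪ Ici y

def zipBelow (x y z : α) : ZipCarrier α x y z → Set α
  | .inl b => Iic b.val
  | .inr _ => Iic x

variable {x y z : α}

theorem zipRank_le_zipRank {ρ : α → ℕ} (hρ : Monotone ρ) (hy : ρ y = ρ x)
    {A B : ZipCarrier α x y z} (hAB : zipLE x y z A B) :
    zipRank x y z ρ A ≤ zipRank x y z ρ B := by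
  rcases A with a | _ <;> rcases B with b | _
  · exact hρ hAB
  · exact hρ (show a.val ≤ x from hAB)
  · rcases (show x ≤ b.val ∨ y ≤ b.val from hAB) with hxb | hyb
    · exact hρ hxb
    · exact (hy ▸ hρ hyb : ρ x ≤ ρ b.val)
  · exact le_rfl

theorem zipLE_inl_iff (A : ZipCarrier α x y z) (c : {p : α // p ≠ x ∧ p ≠ y ∧ p ≠ z}) :
    zipLE x y z A (.inl c) ↔ c.val ∈ zipAbove x y z A := by
  cases A <;> rfl

theorem inl_zipLE_iff (c : {p : α // p ≠ x ∧ p ≠ y ∧ p ≠ z}) (B : ZipCarrier α x y z) :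
    zipLE x y z (.inl c) B ↔ c.val ∈ zipBelow x y z B := by
  cases B <;> rfl

theorem zipLE_inr_iff (A : ZipCarrier α x y z) :
    zipLE x y z A (.inr ()) ↔ x ∈ zipAbove x y z A := by
  cases A
  · rfl
  · simp [zipLE, zipAbove]

theorem inr_zipLE_iff (B : ZipCarrier α x y z) :
    zipLE x y z (.inr ()) B ↔ x ∈ zipBelow x y z B ∨ y ∈ zipBelow x y z B := by
  cases B
  · rfl
  · simp [zipLE, zipBelow]

theorem IsZipper.right_mem_zipAbove_iff (h : IsZipper x y z) (A : ZipCarrier α x y z) :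
    y ∈ zipAbove x y z A ↔ x ∈ zipAbove x y z A := by
  rcases A with a | _
  · exact (h.le_left_iff_le_right a.2.1 a.2.2.1).symm
  · simp [zipAbove]

theorem IsZipper.join_mem_zipAbove_iff [Finite α] (h : IsZipper x y z) (A : ZipCarrier α x y z) :
    z ∈ zipAbove x y z A ↔ x ∈ zipAbove x y z A := by
  rcases A with a | _
  · exact h.le_join_iff a.2.1 a.2.2.1 a.2.2.2
  · simp [zipAbove, h.left_covBy.le]

theorem IsZipper.join_mem_zipBelow_iff (h : IsZipper x y z) (B : ZipCarrier α x y z) :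
    z ∈ zipBelow x y z B ↔ x ∈ zipBelow x y z B ∧ y ∈ zipBelow x y z B := by
  rcases B with b | _
  · exact h.join_le_iff
  · simp [zipBelow, h.left_covBy.lt.not_ge, h.not_right_le_left]

theorem zipEmb_image_zipInterval (A B : ZipCarrier α x y z) :
    zipEmb x y z '' {C | zipLE x y z A C ∧ zipLE x y z C B} =
      (zipAbove x y z A ∩ zipBelow x y z B) \ {x, y, z} ∪
        {c | c = x ∧ zipLE x y z A (.inr ()) ∧ zipLE x y z (.inr ()) B} := by
  ext c
  constructor
  · rintro ⟨c | _, hc, rfl⟩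
    · refine .inl ⟨⟨(zipLE_inl_iff A c).1 hc.1, (inl_zipLE_iff c B).1 hc.2⟩, ?_⟩
      rintro (h | h | h)
      exacts [c.2.1 h, c.2.2.1 h, c.2.2.2 h]
    · exact .inr ⟨rfl, hc⟩
  · rintro (⟨⟨hA, hB⟩, hc⟩ | ⟨rfl, hc⟩)
    · simp only [mem_insert_iff, mem_singleton_iff, not_or] at hc
      exact ⟨.inl ⟨c, hc⟩, ⟨(zipLE_inl_iff A _).2 hA, (inl_zipLE_iff _ B).2 hB⟩, rfl⟩
    · exact ⟨.inr (), hc, rfl⟩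

theorem finsum_zipInterval_neg_one_pow_eq [Finite α] (h : IsZipper x y z) {ρ : α → ℕ}
    (hy : ρ y = ρ x) (hz : ρ z = ρ x + 1) (A B : ZipCarrier α x y z) :
    ∑ᶠ C ∈ {C | zipLE x y z A C ∧ zipLE x y z C B}, (-1 : ℤ) ^ zipRank x y z ρ C =
      ∑ᶠ c ∈ zipAbove x y z A ∩ zipBelow x y z B, (-1 : ℤ) ^ ρ c := by
  classical
  set I := zipAbove x y z A ∩ zipBelow x y z B
  set p := zipLE x y z A (.inr ()) ∧ zipLE x y z (.inr ()) B with hp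
  have hcorner :
      ∑ᶠ c ∈ I ∩ {x, y, z}, (-1 : ℤ) ^ ρ c = ∑ᶠ c ∈ {c | c = x ∧ p}, (-1 : ℤ) ^ ρ c := by
    have hJ : ∑ᶠ c ∈ {c | c = x ∧ p}, (-1 : ℤ) ^ ρ c = if p then (-1) ^ ρ x else 0 := by
      by_cases hpx : p <;> simp [hpx]
    rw [hJ, inter_comm, finsum_mem_def, ← indicator_indicator, ← finsum_mem_def,
      finsum_mem_insert _ (by simp [h.1, h.2.1]) (toFinite _),
      finsum_mem_insert _ (by simp [h.2.2.1]) (toFinite _), finsum_mem_singleton]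
    simp only [I, hp, indicator_apply, mem_inter_iff, h.right_mem_zipAbove_iff,
      h.join_mem_zipAbove_iff, h.join_mem_zipBelow_iff, zipLE_inr_iff, inr_zipLE_iff, hy, hz,
      pow_succ]
    by_cases hU : x ∈ zipAbove x y z A <;> by_cases hxD : x ∈ zipBelow x y z B <;>
      by_cases hyD : y ∈ zipBelow x y z B <;> simp [hU, hxD, hyD]
  calc ∑ᶠ C ∈ {C | zipLE x y z A C ∧ zipLE x y z C B}, (-1 : ℤ) ^ zipRank x y z ρ C
      = ∑ᶠ c ∈ zipEmb x y z '' {C | zipLE x y z A C ∧ zipLE x y z C B}, (-1 : ℤ) ^ ρ c := by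
        rw [finsum_mem_image (zipEmb_injective x y z).injOn, zipRank_eq_comp_zipEmb]; rfl
    _ = ∑ᶠ c ∈ I \ {x, y, z}, (-1 : ℤ) ^ ρ c + ∑ᶠ c ∈ {c | c = x ∧ p}, (-1 : ℤ) ^ ρ c := by
        rw [zipEmb_image_zipInterval]
        refine finsum_mem_union ?_ (toFinite _) (toFinite _)
        exact disjoint_left.2 fun c hc hcx => hc.2 (.inl hcx.1)
    _ = ∑ᶠ c ∈ I, (-1 : ℤ) ^ ρ c := by
        rw [← hcorner, add_comm, finsum_mem_inter_add_sdiff _ (toFinite _)]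

open scoped Classical in
theorem finsum_zipAbove_inter_zipBelow_neg_one_pow [Finite α] (h : IsZipper x y z) {ρ : α → ℕ}
    (hP : ∀ a b : α, ∑ᶠ c ∈ Icc a b, (-1 : ℤ) ^ ρ c = if a = b then (-1) ^ ρ a else 0)
    (A B : ZipCarrier α x y z) :
    ∑ᶠ c ∈ zipAbove x y z A ∩ zipBelow x y z B, (-1 : ℤ) ^ ρ c =
      if A = B then (-1) ^ zipRank x y z ρ A else 0 := by
  rcases A with a | _ <;> rcases B with b | _
  · rw [zipAbove, zipBelow, Ici_inter_Iic, hP]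
    exact if_congr (Sum.inl_injective.eq_iff.trans Subtype.ext_iff).symm rfl rfl
  · rw [zipAbove, zipBelow, Ici_inter_Iic, hP, if_neg a.2.1]
    exact (if_neg Sum.inl_ne_inr).symm
  · have hxyb : Icc x b.val ∩ Icc y b.val = Icc z b.val := by
      ext c
      simp only [mem_inter_iff, mem_Icc, h.join_le_iff]
      tauto
    have hunion := finsum_mem_union_inter (f := fun c => (-1 : ℤ) ^ ρ c)
      (toFinite (Icc x b.val)) (toFinite (Icc y b.val))
    rw [hxyb, hP, hP, hP, if_neg (Ne.symm b.2.1), if_neg (Ne.symm b.2.2.1),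
      if_neg (Ne.symm b.2.2.2), add_zero, add_zero] at hunion
    rw [zipAbove, zipBelow, union_inter_distrib_right, Ici_inter_Iic, Ici_inter_Iic]
    exact hunion.trans (if_neg Sum.inr_ne_inl).symm
  · have hx : (Ici x ∪ Ici y) ∩ Iic x = {x} := by
      ext c
      simp only [mem_inter_iff, mem_union, mem_Ici, mem_Iic, mem_singleton_iff]
      refine ⟨fun ⟨hc, hcx⟩ => ?_, fun hc => ⟨.inl hc.ge, hc.le⟩⟩
      rcases hc with hxc | hyc
      · exact le_antisymm hcx hxc
      · exact absurd (hyc.trans hcx) h.not_right_le_left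
    rw [zipAbove, zipBelow, hx, finsum_mem_singleton]
    exact (if_pos rfl).symm

end Zipped

theorem zipped_eulerian_general {α : Type*} [PartialOrder α] [Finite α]
    (rk : α → ℕ)
    (hrkcov : ∀ a b : α, a ⋖ b → rk b = rk a + 1)
    (x y z : α) (hzip : IsZipper x y z)
    (μP : α → α → ℤ) (hμP : IsMoebius (· ≤ · : α → α → Prop) μP)
    (hEulerian : ∀ a b : α, a ≤ b → μP a b = (-1 : ℤ) ^ (rk b - rk a))
    (μ' : ZipCarrier α x y z → ZipCarrier α x y z → ℤ)
    (hμ' : IsMoebius (zipLE x y z) μ') :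
    ∀ A B : ZipCarrier α x y z, zipLE x y z A B →
      μ' A B = (-1 : ℤ) ^ (zipRank x y z rk B - zipRank x y z rk A) := by
  have hrk : Monotone rk := monotone_of_covBy_eq_add_one hrkcov
  have hy := hzip.rank_right_eq hrkcov
  have hP := (isMoebius_neg_one_pow_iff hrk).1 fun a b hab => by
    rw [← hμP a b hab]
    exact finsum_mem_congr rfl fun c hc => (hEulerian a c hc.1).symm
  -- under this order `(· ≤ ·)` unfolds to `zipLE x y z`, so the lemmas on Möbius functions apply
  let _ : PartialOrder (ZipCarrier α x y z) := hzip.zippedOrder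
  have hν : IsMoebius (zipLE x y z)
      fun A B => (-1 : ℤ) ^ (zipRank x y z rk B - zipRank x y z rk A) :=
    (isMoebius_neg_one_pow_iff fun A B => zipRank_le_zipRank hrk hy).2 fun A B =>
      (finsum_zipInterval_neg_one_pow_eq hzip hy (hzip.rank_join_eq hrkcov) A B).trans
        (finsum_zipAbove_inter_zipBelow_neg_one_pow hzip hP A B)
  exact fun A B hAB => hμ'.eq_of_le hν hAB

/-- zipping a proper zipper in a finite graded Eulerian poset with
`0̂` and `1̂` yields an Eulerian poset. -/
theorem zipped_eulerian {α : Type*} [PartialOrder α] [BoundedOrder α] [Finite α]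
    (rk : α → ℕ) (hrk0 : rk (⊥ : α) = 0)
    (hrkcov : ∀ a b : α, a ⋖ b → rk b = rk a + 1)
    (x y z : α) (hzip : IsZipper x y z) (hproper : z ≠ ⊤)
    (μP : α → α → ℤ) (hμP : IsMoebius (· ≤ · : α → α → Prop) μP)
    (hEulerian : ∀ a b : α, a ≤ b → μP a b = (-1 : ℤ) ^ (rk b - rk a))
    (μ' : ZipCarrier α x y z → ZipCarrier α x y z → ℤ)
    (hμ' : IsMoebius (zipLE x y z) μ') :
    ∀ A B : ZipCarrier α x y z, zipLE x y z A B →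
      μ' A B = (-1 : ℤ) ^ (zipRank x y z rk B - zipRank x y z rk A) :=
  zipped_eulerian_general rk hrkcov x y z hzip μP hμP hEulerian μ' hμ'
end

section
/- Let (W,S) be a Coxeter system with Bruhat order, s ∈ S, u ≤ w with u < us, w < ws, and us ≰ w. Then for every v in the Bruhat interval [u,w], one has vs > v. -/
/-!
If `v * s < v` for some `v` in `[u, w]`, the lifting property applied to `u ≤ v` gives
`u * s ≤ v ≤ w`, contradicting `u * s ≰ w`. Transitivity and lifting of the subword order both
follow from the subword property: every reduced word of `y` contains a reduced subword for each
`x ≤ y`. It is proved by comparing the subword order with the order generated by `y * t < y` for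
reflections `t` (`BruhatChain`), using the strong exchange property. That, in turn, comes from
Tits' reflection cocycle: `W` acts on `W × ZMod 2` with `s i` sending `(t, e)` to
`(s i * t * s i, e + [t = s i])`, and the second coordinate of the image of `(t, 0)` under `w`
is the parity of the occurrences of `t` in the right inversion sequence of any word for `w`,
which is `1` exactly when `t` is a right inversion of `w`.
-/

/-- Bruhat order on a Coxeter group, defined via the subword property:
`u ≤ v` iff some reduced word for `v` contains a reduced word for `u` as a subword. -/
def bruhatLE {B W : Type*} [Group W] {M : CoxeterMatrix B}
    (cs : CoxeterSystem M W) (u v : W) : Prop :=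
  ∃ lv lu : List B, cs.IsReduced lv ∧ cs.wordProd lv = v ∧
    cs.IsReduced lu ∧ cs.wordProd lu = u ∧ lu.Sublist lv

/-- Strict Bruhat order. -/
def bruhatLT {B W : Type*} [Group W] {M : CoxeterMatrix B}
    (cs : CoxeterSystem M W) (u v : W) : Prop :=
  bruhatLE cs u v ∧ u ≠ v

theorem conj_eq_iff_eq_conj {G : Type*} [Group G] {g t x : G} :
    g * t * g⁻¹ = x ↔ t = g⁻¹ * x * g := by
  constructor <;> rintro rfl <;> group

theorem sum_range_two_mul_eq_zero_of_periodic {R : Type*} [Semiring R] [CharP R 2] {n : ℕ}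
    {f : ℕ → R} (hf : ∀ k, f (n + k) = f k) : ∑ k ∈ Finset.range (2 * n), f k = 0 := by
  simp only [two_mul, Finset.sum_range_add, hf, CharTwo.add_self_eq_zero]

namespace CoxeterSystem

open List
open scoped Classical

variable {B W : Type*} [Group W] {M : CoxeterMatrix B} (cs : CoxeterSystem M W)

noncomputable def simpleReflPerm (i : B) : Equiv.Perm (W × ZMod 2) :=
  Function.Involutive.toPerm
    (fun x ↦ (cs.simple i * x.1 * cs.simple i, x.2 + if x.1 = cs.simple i then 1 else 0))
    (by
      rintro ⟨t, e⟩
      have hfix : cs.simple i * t * cs.simple i = cs.simple i ↔ t = cs.simple i := by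
        rw [mul_assoc, mul_eq_left, mul_eq_one_iff_eq_inv, cs.inv_simple]
      simp only [hfix, add_assoc, CharTwo.add_self_eq_zero, add_zero, Prod.mk.injEq, and_true]
      simp [mul_assoc])

theorem simpleReflPerm_apply (i : B) (t : W) (e : ZMod 2) :
    cs.simpleReflPerm i (t, e) =
      (cs.simple i * t * cs.simple i, e + if t = cs.simple i then 1 else 0) :=
  rfl

theorem simpleReflPerm_mul_pow_apply (i j : B) (m : ℕ) (t : W) (e : ZMod 2) :
    ((cs.simpleReflPerm i * cs.simpleReflPerm j) ^ m) (t, e) =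
      ((cs.simple i * cs.simple j) ^ m * t * ((cs.simple i * cs.simple j) ^ m)⁻¹,
        e + ∑ n ∈ Finset.range (2 * m),
          if t = cs.simple j * (cs.simple i * cs.simple j) ^ n then 1 else 0) := by
  induction m with
  | zero => simp
  | succ m ih =>
    rw [pow_succ', Equiv.Perm.mul_apply, ih, Equiv.Perm.mul_apply, simpleReflPerm_apply,
      simpleReflPerm_apply]
    set a := cs.simple i
    set b := cs.simple j
    set p := a * b
    have ha : a⁻¹ = a := cs.inv_simple i
    have hb : b⁻¹ = b := cs.inv_simple j
    have hp : p⁻¹ = b * a := by simp only [p, mul_inv_rev, ha, hb]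
    have hX (k : ℕ) : p ^ m * t * (p ^ m)⁻¹ = b * p ^ k ↔ t = b * p ^ (2 * m + k) := by
      have hcomm : SemiconjBy b p p⁻¹ := by simp only [SemiconjBy, hp, p, mul_assoc]
      rw [conj_eq_iff_eq_conj, ← inv_pow, ← mul_assoc, ← (hcomm.pow_right m).eq, two_mul,
        pow_add, pow_add]
      group
    have hbXb (X : W) : b * X * b = a ↔ X = b * p := by
      nth_rw 2 [← hb]
      rw [conj_eq_iff_eq_conj, hb, mul_assoc]
    have hX₀ := hX 0
    have hX₁ := hX 1
    rw [pow_zero, mul_one, add_zero] at hX₀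
    rw [pow_one] at hX₁
    dsimp only
    rw [hbXb, hX₀, hX₁, Prod.mk.injEq]
    constructor
    · rw [pow_succ', mul_inv_rev, hp]
      simp only [p, mul_assoc]
    · rw [show 2 * (m + 1) = 2 * m + 1 + 1 by ring, Finset.sum_range_succ, Finset.sum_range_succ]
      ring

theorem isLiftable_simpleReflPerm : M.IsLiftable cs.simpleReflPerm := by
  intro i j
  ext1 ⟨t, e⟩
  have hM := cs.simple_mul_simple_pow i j
  rw [simpleReflPerm_mul_pow_apply, hM, one_mul, inv_one, mul_one,
    sum_range_two_mul_eq_zero_of_periodic fun k ↦ by rw [pow_add, hM, one_mul], add_zero]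
  rfl

noncomputable def reflRep : W →* Equiv.Perm (W × ZMod 2) :=
  cs.lift ⟨cs.simpleReflPerm, cs.isLiftable_simpleReflPerm⟩

theorem reflRep_simple (i : B) : cs.reflRep (cs.simple i) = cs.simpleReflPerm i :=
  cs.lift_apply_simple cs.isLiftable_simpleReflPerm i

theorem reflRep_wordProd (ω : List B) (t : W) (e : ZMod 2) :
    cs.reflRep (cs.wordProd ω) (t, e) =
      (cs.wordProd ω * t * (cs.wordProd ω)⁻¹, e + (cs.rightInvSeq ω).count t) := by
  induction ω generalizing e with
  | nil => simp
  | cons i ω ih =>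
    rw [wordProd_cons, map_mul, Equiv.Perm.mul_apply, ih, reflRep_simple, simpleReflPerm_apply,
      rightInvSeq, count_cons, conj_eq_iff_eq_conj, Prod.mk.injEq]
    constructor
    · rw [mul_inv_rev, cs.inv_simple]
      group
    · simp only [Nat.cast_add, Nat.cast_ite, Nat.cast_one, Nat.cast_zero, beq_iff_eq,
        @eq_comm W t, add_assoc]

noncomputable def reflCocycle (w t : W) : ZMod 2 := (cs.reflRep w (t, 0)).2

theorem reflRep_apply (w t : W) (e : ZMod 2) :
    cs.reflRep w (t, e) = (w * t * w⁻¹, e + cs.reflCocycle w t) := by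
  obtain ⟨ω, rfl⟩ := cs.wordProd_surjective w
  simp only [reflCocycle, reflRep_wordProd, zero_add]

theorem reflCocycle_wordProd (ω : List B) (t : W) :
    cs.reflCocycle (cs.wordProd ω) t = (cs.rightInvSeq ω).count t := by
  simp only [reflCocycle, reflRep_wordProd, zero_add]

theorem reflCocycle_one (t : W) : cs.reflCocycle 1 t = 0 := by
  simp [reflCocycle]

theorem reflCocycle_simple (i : B) (t : W) :
    cs.reflCocycle (cs.simple i) t = if t = cs.simple i then 1 else 0 := by
  simp [reflCocycle, reflRep_simple, simpleReflPerm_apply]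

theorem reflCocycle_mul (x y t : W) :
    cs.reflCocycle (x * y) t = cs.reflCocycle y t + cs.reflCocycle x (y * t * y⁻¹) := by
  have h := congrArg Prod.snd (Equiv.Perm.mul_apply (cs.reflRep x) (cs.reflRep y) (t, 0))
  simpa [← map_mul, reflRep_apply] using h

theorem reflCocycle_self {t : W} (ht : cs.IsReflection t) : cs.reflCocycle t t = 1 := by
  obtain ⟨w, i, rfl⟩ := ht
  have hconj : w⁻¹ * (w * cs.simple i * w⁻¹) * w⁻¹⁻¹ = cs.simple i := by group
  have hinv := cs.reflCocycle_mul w w⁻¹ (w * cs.simple i * w⁻¹)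
  rw [mul_inv_cancel, reflCocycle_one, hconj] at hinv
  have hsimple : cs.simple i * cs.simple i * (cs.simple i)⁻¹ = cs.simple i := by
    rw [cs.inv_simple, cs.simple_mul_simple_cancel_right]
  rw [reflCocycle_mul, hconj, reflCocycle_mul, hsimple, reflCocycle_simple, if_pos rfl]
  linear_combination -hinv

theorem mem_rightInvSeq_of_reflCocycle_eq_one {ω : List B} {t : W}
    (h : cs.reflCocycle (cs.wordProd ω) t = 1) : t ∈ cs.rightInvSeq ω := by
  rw [reflCocycle_wordProd, ZMod.natCast_eq_one_iff_odd] at h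
  exact List.count_pos_iff.mp h.pos

theorem isRightInversion_of_reflCocycle_eq_one {w t : W} (h : cs.reflCocycle w t = 1) :
    cs.IsRightInversion w t := by
  obtain ⟨ω, hω, rfl⟩ := cs.exists_isReduced w
  exact cs.isRightInversion_of_mem_rightInvSeq hω (cs.mem_rightInvSeq_of_reflCocycle_eq_one h)

theorem reflCocycle_eq_one_iff {w t : W} :
    cs.reflCocycle w t = 1 ↔ cs.IsRightInversion w t := by
  refine ⟨cs.isRightInversion_of_reflCocycle_eq_one, fun ⟨ht, hlt⟩ ↦ ?_⟩
  obtain h0 | h1 := (by decide : ∀ x : ZMod 2, x = 0 ∨ x = 1) (cs.reflCocycle w t)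
  · -- otherwise `t` would be a right inversion of `w * t`, i.e. `ℓ w < ℓ (w * t)`
    have hwt : cs.reflCocycle (w * t) t = 1 := by
      rw [reflCocycle_mul, reflCocycle_self cs ht, ht.mul_self, one_mul, ht.inv, h0, add_zero]
    have := (cs.isRightInversion_of_reflCocycle_eq_one hwt).2
    rw [mul_assoc, ht.mul_self, mul_one] at this
    omega
  · exact h1

theorem reflCocycle_eq_zero_iff {w t : W} :
    cs.reflCocycle w t = 0 ↔ ¬cs.IsRightInversion w t := by
  rw [← reflCocycle_eq_one_iff]
  generalize cs.reflCocycle w t = x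
  revert x
  decide

theorem mul_eq_simple_mul_of_isRightInversion {c t : W} {i : B} (h : cs.IsRightInversion c t)
    (h' : ¬cs.IsRightInversion (cs.simple i * c) t) : c * t = cs.simple i * c := by
  rw [← reflCocycle_eq_one_iff] at h
  rw [← reflCocycle_eq_zero_iff] at h'
  nth_rw 1 [← cs.simple_mul_simple_cancel_left (w := c) i] at h
  rw [reflCocycle_mul, h', zero_add, reflCocycle_simple] at h
  split_ifs at h with hconj
  · rw [conj_eq_iff_eq_conj] at hconj
    rw [hconj, mul_inv_rev, cs.inv_simple]
    simp [mul_assoc]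
  · exact absurd h zero_ne_one

/-- The strong exchange property. -/
theorem exists_wordProd_eraseIdx_eq_mul {ω : List B} {t : W}
    (ht : cs.IsRightInversion (cs.wordProd ω) t) :
    ∃ j < ω.length, cs.wordProd (ω.eraseIdx j) = cs.wordProd ω * t := by
  rw [← reflCocycle_eq_one_iff] at ht
  obtain ⟨j, hj, rfl⟩ := List.getElem_of_mem (cs.mem_rightInvSeq_of_reflCocycle_eq_one ht)
  refine ⟨j, by simpa using hj, ?_⟩
  rw [← wordProd_mul_getD_rightInvSeq, List.getD_eq_getElem]

theorem isReduced_cons_iff {ω : List B} {i : B} :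
    cs.IsReduced (i :: ω) ↔ cs.IsReduced ω ∧ ¬cs.IsLeftDescent (cs.wordProd ω) i := by
  have hle := cs.length_wordProd_le ω
  have hmul := cs.length_simple_mul (cs.wordProd ω) i
  simp only [IsReduced, wordProd_cons, length_cons, not_isLeftDescent_iff]
  omega

theorem isReduced_concat_iff {ω : List B} {i : B} :
    cs.IsReduced (ω ++ [i]) ↔ cs.IsReduced ω ∧ ¬cs.IsRightDescent (cs.wordProd ω) i := by
  have hle := cs.length_wordProd_le ω
  have hmul := cs.length_mul_simple (cs.wordProd ω) i
  simp only [IsReduced, wordProd_append, wordProd_singleton, length_append, length_singleton,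
    not_isRightDescent_iff]
  omega

/-- The deletion property. -/
theorem exists_reduced_sublist (ω : List B) :
    ∃ χ, χ <+ ω ∧ cs.IsReduced χ ∧ cs.wordProd χ = cs.wordProd ω := by
  induction ω using List.reverseRecOn with
  | nil => exact ⟨[], .slnil, by simp [IsReduced], rfl⟩
  | append_singleton ω i ih =>
    obtain ⟨χ, hsub, hχ, hprod⟩ := ih
    rw [wordProd_append, wordProd_singleton, ← hprod]
    by_cases hi : cs.IsRightDescent (cs.wordProd χ) i
    · obtain ⟨j, hj, hj'⟩ :=
        cs.exists_wordProd_eraseIdx_eq_mul ⟨cs.isReflection_simple i, hi⟩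
      refine ⟨χ.eraseIdx j, (χ.eraseIdx_sublist j).trans (hsub.trans (sublist_append_left ω [i])),
        ?_, hj'⟩
      have hlen := hχ.eq
      rw [isRightDescent_iff] at hi
      rw [IsReduced, hj', List.length_eraseIdx_of_lt hj]
      omega
    · exact ⟨χ ++ [i], hsub.append_right [i], cs.isReduced_concat_iff.mpr ⟨hχ, hi⟩, by
        rw [wordProd_append, wordProd_singleton]⟩

def BruhatChain (x y : W) : Prop :=
  Relation.ReflTransGen (fun a b ↦ ∃ t, cs.IsRightInversion b t ∧ a = b * t) x y

theorem bruhatChain_mul {y t : W} (h : cs.IsRightInversion y t) : cs.BruhatChain (y * t) y :=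
  .single ⟨t, h, rfl⟩

theorem bruhatChain_simple_mul {x : W} {i : B} (h : ¬cs.IsLeftDescent x i) :
    cs.BruhatChain x (cs.simple i * x) := by
  have hx : cs.simple i * x * (x⁻¹ * cs.simple i * x) = x := by
    simp [mul_assoc, cs.simple_mul_simple_cancel_left]
  rw [not_isLeftDescent_iff] at h
  have := cs.bruhatChain_mul (y := cs.simple i * x) (t := x⁻¹ * cs.simple i * x)
    ⟨⟨x⁻¹, i, by rw [inv_inv]⟩, by rw [hx, h]; omega⟩
  rwa [hx] at this

variable {cs} in
theorem BruhatChain.simple_mul {x y : W} {i : B} (h : cs.BruhatChain x y)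
    (hy : ¬cs.IsLeftDescent y i) : cs.BruhatChain (cs.simple i * x) (cs.simple i * y) := by
  induction h using Relation.ReflTransGen.head_induction_on with
  | refl => exact .refl
  | @head _ c hstep hchain ih =>
    obtain ⟨t, ht, rfl⟩ := hstep
    by_cases hst : cs.IsRightInversion (cs.simple i * c) t
    · rw [← mul_assoc]
      exact (cs.bruhatChain_mul hst).trans ih
    · rw [cs.mul_eq_simple_mul_of_isRightInversion ht hst, cs.simple_mul_simple_cancel_left]
      exact hchain.trans (cs.bruhatChain_simple_mul hy)

theorem bruhatChain_of_sublist {ω χ : List B} (hω : cs.IsReduced ω) (hχ : cs.IsReduced χ)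
    (h : χ <+ ω) : cs.BruhatChain (cs.wordProd χ) (cs.wordProd ω) := by
  induction ω generalizing χ with
  | nil => rw [sublist_nil.mp h]; exact .refl
  | cons i ρ ih =>
    obtain ⟨hρ, hi⟩ := cs.isReduced_cons_iff.mp hω
    rcases sublist_cons_iff.mp h with hsub | ⟨r, rfl, hsub⟩
    · rw [wordProd_cons]
      exact (ih hρ hχ hsub).trans (cs.bruhatChain_simple_mul hi)
    · rw [wordProd_cons, wordProd_cons]
      exact (ih hρ (cs.isReduced_cons_iff.mp hχ).1 hsub).simple_mul hi

variable {cs} in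
theorem BruhatChain.exists_sublist {x y : W} (h : cs.BruhatChain x y) {ω : List B}
    (hω : cs.IsReduced ω) (hy : cs.wordProd ω = y) :
    ∃ χ, χ <+ ω ∧ cs.IsReduced χ ∧ cs.wordProd χ = x := by
  induction h using Relation.ReflTransGen.head_induction_on with
  | refl => exact ⟨ω, .refl ω, hω, hy⟩
  | head hstep _ ih =>
    obtain ⟨t, ht, rfl⟩ := hstep
    obtain ⟨χ, hsub, -, rfl⟩ := ih
    obtain ⟨j, -, hj⟩ := cs.exists_wordProd_eraseIdx_eq_mul ht
    obtain ⟨χ', hsub', hχ', hprod⟩ := cs.exists_reduced_sublist (χ.eraseIdx j)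
    exact ⟨χ', hsub'.trans ((χ.eraseIdx_sublist j).trans hsub), hχ', hprod.trans hj⟩

end CoxeterSystem

section BruhatOrder

open CoxeterSystem List

variable {B W : Type*} [Group W] {M : CoxeterMatrix B} {cs : CoxeterSystem M W}

theorem exists_sublist_of_bruhatLE {x y : W} (h : bruhatLE cs x y) {ω : List B}
    (hω : cs.IsReduced ω) (hy : cs.wordProd ω = y) :
    ∃ χ, χ <+ ω ∧ cs.IsReduced χ ∧ cs.wordProd χ = x := by
  obtain ⟨lv, lu, hlv, rfl, hlu, rfl, hsub⟩ := h
  exact (cs.bruhatChain_of_sublist hlv hlu hsub).exists_sublist hω hy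

theorem bruhatLE_trans {x y z : W} (hxy : bruhatLE cs x y) (hyz : bruhatLE cs y z) :
    bruhatLE cs x z := by
  obtain ⟨lz, ly, hlz, rfl, hly, rfl, hsub⟩ := hyz
  obtain ⟨lx, hsub', hlx, rfl⟩ := exists_sublist_of_bruhatLE hxy hly rfl
  exact ⟨lz, lx, hlz, rfl, hlx, rfl, hsub'.trans hsub⟩

theorem length_le_of_bruhatLE {x y : W} (h : bruhatLE cs x y) : cs.length x ≤ cs.length y := by
  obtain ⟨lv, lu, hlv, rfl, hlu, rfl, hsub⟩ := h
  rw [hlv.eq, hlu.eq]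
  exact hsub.length_le

/-- The lifting property. -/
theorem bruhatLE_mul_simple {u v : W} {i : B} (h : bruhatLE cs u v)
    (hu : ¬cs.IsRightDescent u i) (hv : cs.IsRightDescent v i) :
    bruhatLE cs (u * cs.simple i) v := by
  obtain ⟨χ, hχ, hχv⟩ := cs.exists_isReduced (v * cs.simple i)
  have hω : cs.IsReduced (χ ++ [i]) :=
    cs.isReduced_concat_iff.mpr ⟨hχ, by rwa [← hχv, ← isRightDescent_iff_not_isRightDescent_mul]⟩
  have hωv : cs.wordProd (χ ++ [i]) = v := by
    rw [wordProd_append, wordProd_singleton, ← hχv, simple_mul_simple_cancel_right]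
  obtain ⟨lu, hsub, hlu, rfl⟩ := exists_sublist_of_bruhatLE h hω hωv
  obtain ⟨l, l', rfl, hl, hl'⟩ := sublist_append_iff.mp hsub
  -- a reduced subword of `χ ++ [i]` for `u` either avoids the last letter, so that it can be
  -- appended, or ends with it, so that dropping it leaves a subword for `u * s i`
  rcases sublist_singleton.mp hl' with rfl | rfl
  · rw [append_nil] at hlu hu ⊢
    exact ⟨χ ++ [i], l ++ [i], hω, hωv, cs.isReduced_concat_iff.mpr ⟨hlu, hu⟩,
      by rw [wordProd_append, wordProd_singleton], hl.append_right [i]⟩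
  · exact ⟨χ ++ [i], l, hω, hωv, (cs.isReduced_concat_iff.mp hlu).1,
      by rw [wordProd_append, wordProd_singleton, simple_mul_simple_cancel_right],
      hl.trans (sublist_append_left χ [i])⟩

theorem bruhatLT_mul_simple {v : W} {i : B} (h : ¬cs.IsRightDescent v i) :
    bruhatLT cs v (v * cs.simple i) := by
  obtain ⟨ω, hω, rfl⟩ := cs.exists_isReduced v
  refine ⟨⟨ω ++ [i], ω, cs.isReduced_concat_iff.mpr ⟨hω, h⟩, by
    rw [wordProd_append, wordProd_singleton], hω, rfl, sublist_append_left ω [i]⟩, fun heq ↦ ?_⟩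
  rw [not_isRightDescent_iff, ← heq] at h
  omega

end BruhatOrder

theorem bruhat_lengthened_in_interval_general {B W : Type*} [Group W] {M : CoxeterMatrix B}
    (cs : CoxeterSystem M W) (u w : W) (s : B)
    (hu : bruhatLT cs u (u * cs.simple s))
    (hus : ¬ bruhatLE cs (u * cs.simple s) w) :
    ∀ v : W, bruhatLE cs u v → bruhatLE cs v w →
      bruhatLT cs v (v * cs.simple s) := by
  intro v huv hvw
  have hu' : ¬cs.IsRightDescent u s := (length_le_of_bruhatLE hu.1).not_gt
  exact bruhatLT_mul_simple fun hv ↦ hus (bruhatLE_trans (bruhatLE_mul_simple huv hu' hv) hvw)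

/-- if `u < us`, `w < ws`, `u ≤ w` and `us ≰ w`, then every `v` in the
Bruhat interval `[u,w]` satisfies `vs > v`. -/
theorem bruhat_lengthened_in_interval {B W : Type*} [Group W] {M : CoxeterMatrix B}
    (cs : CoxeterSystem M W) (u w : W) (s : B)
    (huw : bruhatLE cs u w)
    (hu : bruhatLT cs u (u * cs.simple s))
    (hw : bruhatLT cs w (w * cs.simple s))
    (hus : ¬ bruhatLE cs (u * cs.simple s) w) :
    ∀ v : W, bruhatLE cs u v → bruhatLE cs v w →
      bruhatLT cs v (v * cs.simple s) :=
  bruhat_lengthened_in_interval_general cs u w s hu hus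
end
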